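/- arXiv:1408.3040 — 2 statements merged into one kernel-verified Lean document; each statement's English description precedes it below -/
import Mathlib

section
/- For every T > 0, the mixed partial derivative ∂_T ∂_S² ∂_U² F_odd(S,T,U) evaluated at S = U = 0 equals 4·(d/dT)[ ( (C'(T)/C(T))² − α² )² ]. -/
open Real MeasureTheory Filter

/-- `Σ = √(3α²/2 − 1/8)`. -/
noncomputable def Sg (α : ℝ) : ℝ := Real.sqrt (3 * α ^ 2 / 2 - 1 / 8)

/-- `C(T) = Σ·cosh(ΣT) + α·sinh(ΣT)`. -/
noncomputable def Cg (α : ℝ) (T : ℝ) : ℝ :=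
  Sg α * Real.cosh (Sg α * T) + α * Real.sinh (Sg α * T)

/-- `Ĉ(T) = 2αΣ·cosh(ΣT) + (α²+Σ²)·sinh(ΣT)`. -/
noncomputable def Chat (α : ℝ) (T : ℝ) : ℝ :=
  2 * α * Sg α * Real.cosh (Sg α * T) + (α ^ 2 + Sg α ^ 2) * Real.sinh (Sg α * T)

/-- The even part of the three-point generating function. -/
noncomputable def Feven (α : ℝ) (S T U : ℝ) : ℝ :=
  (1 / Sg α ^ 2) * (Cg α S ^ 2 * Cg α T ^ 2 * Cg α U ^ 2 * Cg α (S + T + U) ^ 2)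
    / (Cg α (S + T) ^ 2 * Cg α (T + U) ^ 2 * Cg α (U + S) ^ 2)

/-- The odd part of the three-point generating function. -/
noncomputable def Fodd (α : ℝ) (S T U : ℝ) : ℝ :=
  ((α ^ 2 - Sg α ^ 2) ^ 2 / Sg α ^ 2) *
    (Real.sinh (Sg α * S) ^ 2 * Real.sinh (Sg α * T) ^ 2 * Real.sinh (Sg α * U) ^ 2
      * Chat α (S + T + U) ^ 2)
    / (Cg α (S + T) ^ 2 * Cg α (T + U) ^ 2 * Cg α (U + S) ^ 2)

/-- `F = F_even + F_odd`. -/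
noncomputable def Fg (α : ℝ) (S T U : ℝ) : ℝ := Feven α S T U + Fodd α S T U

/-!
`F_odd` carries the factor `sinh²(ΣU)`, which vanishes to second order at `U = 0`, so
`∂_U² F_odd` at `U = 0` is `2Σ²` times the remaining factor at `U = 0`; the same happens in `S`.
Hence `∂_S² ∂_U² F_odd` at `S = U = 0` equals `4 (α² − Σ²)² sinh²(ΣT) Ĉ(T)² / C(T)⁴`, which is
`4 ((C'/C)² − α²)²` because `C'² − α²C² = (Σ² − α²) sinh(ΣT) Ĉ(T)`. The two sides agree on a
neighbourhood of every `T > 0` (where `C > 0`), so their `T`-derivatives agree there.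
-/

open Topology

section IteratedDeriv

variable {𝕜 : Type*} [NontriviallyNormedField 𝕜] {𝔸 : Type*} [NormedRing 𝔸] [NormedAlgebra 𝕜 𝔸]
  {f g : 𝕜 → 𝔸} {x : 𝕜}

lemma iteratedDeriv_two_mul_of_deriv_eq_zero (hf : ContDiffAt 𝕜 2 f x) (hg : ContDiffAt 𝕜 2 g x)
    (hf₀ : f x = 0) (hf₁ : deriv f x = 0) :
    iteratedDeriv 2 (fun y => f y * g y) x = iteratedDeriv 2 f x * g x := by
  simp [iteratedDeriv_fun_mul hf hg, Finset.sum_range_succ, hf₀, hf₁]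

end IteratedDeriv

lemma iteratedDeriv_two_sinh_sq_mul (c : ℝ) {g : ℝ → ℝ} (hg : ContDiffAt ℝ 2 g 0) :
    iteratedDeriv 2 (fun u => sinh (c * u) ^ 2 * g u) 0 = 2 * c ^ 2 * g 0 := by
  have hsinh : ContDiff ℝ 2 fun u => sinh (c * u) := by fun_prop
  have hsq : iteratedDeriv 2 (fun u => sinh (c * u) ^ 2) 0 = 2 * c ^ 2 := by
    simpa [sq, mul_assoc, iteratedDeriv_comp_const_mul Real.contDiff_sinh, Finset.sum_range_succ]
      using iteratedDeriv_fun_mul (x := (0 : ℝ)) hsinh.contDiffAt hsinh.contDiffAt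
  have hderiv : deriv (fun u => sinh (c * u) ^ 2) 0 = 0 := by
    simpa using (((hasDerivAt_id' (0 : ℝ)).const_mul c).sinh.fun_pow 2).deriv
  rw [iteratedDeriv_two_mul_of_deriv_eq_zero (by fun_prop) hg (by simp) hderiv, hsq]

section Cg

variable {α : ℝ}

@[fun_prop]
lemma contDiff_Cg (α : ℝ) {n : WithTop ℕ∞} : ContDiff ℝ n (Cg α) := by
  unfold Cg; fun_prop

@[fun_prop]
lemma contDiff_Chat (α : ℝ) {n : WithTop ℕ∞} : ContDiff ℝ n (Chat α) := by
  unfold Chat; fun_prop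

@[simp]
lemma Cg_zero (α : ℝ) : Cg α 0 = Sg α := by simp [Cg]

lemma Sg_pos (hα : 1 / (2 * √3) < α) : 0 < Sg α := by
  have h12 : (1 / (2 * √3)) ^ 2 = 1 / 12 := by
    rw [div_pow, mul_pow, Real.sq_sqrt (by norm_num)]; norm_num
  have : 1 / 12 < α ^ 2 := h12 ▸ pow_lt_pow_left₀ hα (by positivity) two_ne_zero
  exact Real.sqrt_pos.mpr (by linarith)

lemma Cg_pos (hα : 0 ≤ α) (hS : 0 < Sg α) {x : ℝ} (hx : 0 ≤ x) : 0 < Cg α x :=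
  add_pos_of_pos_of_nonneg (mul_pos hS (cosh_pos _))
    (mul_nonneg hα (sinh_nonneg_iff.mpr (by positivity)))

lemma hasDerivAt_Cg (α x : ℝ) :
    HasDerivAt (Cg α) (Sg α ^ 2 * sinh (Sg α * x) + α * Sg α * cosh (Sg α * x)) x := by
  have hlin := (hasDerivAt_id' x).const_mul (Sg α)
  exact ((hlin.cosh.const_mul (Sg α)).add (hlin.sinh.const_mul α)).congr_deriv (by ring)

-- `C'² - α²C² = (C' - αC)(C' + αC)`, where `C' - αC = (Σ² - α²) sinh(ΣT)` and `C' + αC = Ĉ`.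
lemma deriv_Cg_div_sq_sub_sq {x : ℝ} (hx : Cg α x ≠ 0) :
    (deriv (Cg α) x / Cg α x) ^ 2 - α ^ 2
      = (Sg α ^ 2 - α ^ 2) * sinh (Sg α * x) * Chat α x / Cg α x ^ 2 := by
  rw [(hasDerivAt_Cg α x).deriv]
  field_simp
  simp only [Cg, Chat]
  ring

end Cg

section Fodd

variable {α S T : ℝ}

lemma iteratedDeriv_Fodd_U_zero (hS0 : Sg α ≠ 0) (hS : Cg α S ≠ 0) (hT : Cg α T ≠ 0)
    (hST : Cg α (S + T) ≠ 0) :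
    iteratedDeriv 2 (fun U => Fodd α S T U) 0
      = sinh (Sg α * S) ^ 2 * (2 * (α ^ 2 - Sg α ^ 2) ^ 2 * sinh (Sg α * T) ^ 2
          * Chat α (S + T) ^ 2 / (Cg α (S + T) ^ 2 * Cg α T ^ 2 * Cg α S ^ 2)) := by
  have hrest : ContDiffAt ℝ 2 (fun U => (α ^ 2 - Sg α ^ 2) ^ 2 / Sg α ^ 2 *
      (sinh (Sg α * S) ^ 2 * sinh (Sg α * T) ^ 2 * Chat α (S + T + U) ^ 2)
      / (Cg α (S + T) ^ 2 * Cg α (T + U) ^ 2 * Cg α (U + S) ^ 2)) 0 := by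
    fun_prop (disch := simp [hS, hT, hST])
  have hsplit : (fun U => Fodd α S T U) = fun U => sinh (Sg α * U) ^ 2 *
      ((α ^ 2 - Sg α ^ 2) ^ 2 / Sg α ^ 2 *
      (sinh (Sg α * S) ^ 2 * sinh (Sg α * T) ^ 2 * Chat α (S + T + U) ^ 2)
      / (Cg α (S + T) ^ 2 * Cg α (T + U) ^ 2 * Cg α (U + S) ^ 2)) := by
    funext U
    simp only [Fodd]
    ring
  rw [hsplit, iteratedDeriv_two_sinh_sq_mul _ hrest]
  simp only [add_zero, zero_add]
  field_simp

lemma iteratedDeriv_Fodd_SU_zero (hS0 : Sg α ≠ 0) (hT : Cg α T ≠ 0) :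
    iteratedDeriv 2 (fun S => iteratedDeriv 2 (fun U => Fodd α S T U) 0) 0
      = 4 * ((deriv (Cg α) T / Cg α T) ^ 2 - α ^ 2) ^ 2 := by
  have hcont : Continuous (Cg α) := (contDiff_Cg α (n := 0)).continuous
  have hnear : ∀ᶠ S in 𝓝 0, Cg α S ≠ 0 ∧ Cg α (S + T) ≠ 0 :=
    (hcont.continuousAt.eventually_ne (by simpa using hS0)).and
      ((hcont.comp (continuous_add_const T)).continuousAt.eventually_ne (by simpa using hT))
  have hrest : ContDiffAt ℝ 2 (fun S => 2 * (α ^ 2 - Sg α ^ 2) ^ 2 * sinh (Sg α * T) ^ 2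
      * Chat α (S + T) ^ 2 / (Cg α (S + T) ^ 2 * Cg α T ^ 2 * Cg α S ^ 2)) 0 := by
    fun_prop (disch := simp [hS0, hT])
  have hinner : (fun S => iteratedDeriv 2 (fun U => Fodd α S T U) 0) =ᶠ[𝓝 0] _ :=
    hnear.mono fun S hS => iteratedDeriv_Fodd_U_zero hS0 hS.1 hT hS.2
  rw [hinner.iteratedDeriv_eq, iteratedDeriv_two_sinh_sq_mul _ hrest, deriv_Cg_div_sq_sub_sq hT]
  simp only [zero_add, Cg_zero]
  field_simp
  ring

end Fodd

theorem stmt8_general (α : ℝ) (h1 : 1 / (2 * Real.sqrt 3) < α) :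
    ∀ T : ℝ, 0 < T →
      deriv (fun T' =>
          iteratedDeriv 2 (fun S' => iteratedDeriv 2 (fun U' => Fodd α S' T' U') 0) 0) T
        = 4 * deriv (fun T' => ((deriv (Cg α) T' / Cg α T') ^ 2 - α ^ 2) ^ 2) T := by
  intro T hT
  have hS := Sg_pos h1
  have hα : 0 ≤ α := le_trans (by positivity) h1.le
  have hpointwise : (fun T' =>
      iteratedDeriv 2 (fun S' => iteratedDeriv 2 (fun U' => Fodd α S' T' U') 0) 0)
      =ᶠ[𝓝 T] fun T' => 4 * ((deriv (Cg α) T' / Cg α T') ^ 2 - α ^ 2) ^ 2 := by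
    filter_upwards [Ioi_mem_nhds hT] with T' hT'
    exact iteratedDeriv_Fodd_SU_zero hS.ne' (Cg_pos hα hS (le_of_lt hT')).ne'
  rw [hpointwise.deriv_eq, deriv_const_mul_field']

/-- For `T > 0`,
`∂_T ∂_S² ∂_U² F_odd(S,T,U)|_{S=U=0} = 4·(d/dT)[((C'(T)/C(T))² − α²)²]`. -/
theorem stmt8 (α : ℝ) (h1 : 1 / (2 * Real.sqrt 3) < α) (h2 : α < 1 / 2) :
    ∀ T : ℝ, 0 < T →
      deriv (fun T' =>
          iteratedDeriv 2 (fun S' => iteratedDeriv 2 (fun U' => Fodd α S' T' U') 0) 0) T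
        = 4 * deriv (fun T' => ((deriv (Cg α) T' / Cg α T') ^ 2 - α ^ 2) ^ 2) T :=
  stmt8_general α h1
end

section
/- For ε ∈ (0, 1/√24) define g(ε) = (1 − 24ε²)/(12√3), let α(ε) be the largest real root of the cubic x³ − x/4 + g(ε) = 0 (which satisfies 1/(2√3) < α(ε) < 1/2), set Σ(ε) = √(3α(ε)²/2 − 1/8), and C_ε(T) = Σ(ε)·cosh(Σ(ε)T) + α(ε)·sinh(Σ(ε)T). Then for every fixed T₀ > 0, lim_{ε→0⁺} ε^{−3/2} · (log C_ε)'''(T₀·ε^{−1/2}) = 2·cosh(T₀)/sinh³(T₀). (This is the scaling limit of the two-point function of weighted cubic maps, which coincides with the two-point function of the Brownian map.) -/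
/-!
Since `C'' = Σ² C`, the logarithmic derivative `L = C'/C` solves the Riccati equation
`L' = Σ² - L²`, so `(log C)''' = 2 L (L² - Σ²)`. With `a = 1/(2√3)` the cubic becomes
`(α - a)² (α + 2a) = 48 a³ ε²`, hence `α - a ~ 4aε`, `Σ² = (3/2)(α - a)(α + a) ~ ε` and
`Σ ε^{-1/2} → 1`. At `T = T₀ ε^{-1/2}` the rescaled logarithmic derivative `ε^{-1/2} L` then tends
to `coth T₀`, and `2 coth (coth² - 1) = 2 cosh / sinh³`.
-/

open Real Filter Topology Set

theorem iteratedDeriv_three_log_of_linear_ode {f f' : ℝ → ℝ} {c t : ℝ} {U : Set ℝ}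
    (hU : IsOpen U) (ht : t ∈ U) (hf : ∀ x ∈ U, HasDerivAt f (f' x) x)
    (hf' : ∀ x ∈ U, HasDerivAt f' (c * f x) x) (hf0 : ∀ x ∈ U, f x ≠ 0) :
    iteratedDeriv 3 (fun x => log (f x)) t = 2 * (f' t / f t) * ((f' t / f t) ^ 2 - c) := by
  set L : ℝ → ℝ := fun x => f' x / f x
  have hlog : ∀ x ∈ U, HasDerivAt (fun x => log (f x)) (L x) x :=
    fun x hx => (hf x hx).log (hf0 x hx)
  have hL : ∀ x ∈ U, HasDerivAt L (c - L x ^ 2) x := by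
    intro x hx
    refine ((hf' x hx).div (hf x hx) (hf0 x hx)).congr_deriv ?_
    simp only [L]
    field_simp [hf0 x hx]
  have hL' : HasDerivAt (fun x => c - L x ^ 2) (2 * L t * (L t ^ 2 - c)) t :=
    (((hL t ht).pow 2).const_sub c).congr_deriv (by norm_num; ring)
  have hlog'' : ∀ x ∈ U, deriv (deriv fun x => log (f x)) x = c - L x ^ 2 := by
    intro x hx
    rw [(eventuallyEq_of_mem (hU.mem_nhds hx) fun y hy => (hlog y hy).deriv).deriv_eq]
    exact (hL x hx).deriv
  rw [iteratedDeriv_succ, iteratedDeriv_succ, iteratedDeriv_one,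
    (eventuallyEq_of_mem (hU.mem_nhds ht) hlog'').deriv_eq]
  exact hL'.deriv

theorem hasDerivAt_mul_cosh_add_mul_sinh (A B s T : ℝ) :
    HasDerivAt (fun T => A * cosh (s * T) + B * sinh (s * T))
      (s * (B * cosh (s * T) + A * sinh (s * T))) T := by
  have hs : HasDerivAt (fun T => s * T) s T := by simpa using (hasDerivAt_id T).const_mul s
  exact ((((hasDerivAt_cosh _).comp T hs).const_mul A).add
    (((hasDerivAt_sinh _).comp T hs).const_mul B)).congr_deriv (by ring)

theorem iteratedDeriv_three_log_mul_cosh_add_mul_sinh {s a t : ℝ} (hs : 0 < s) (ha : 0 ≤ a)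
    (ht : 0 < t) :
    iteratedDeriv 3 (fun T => log (s * cosh (s * T) + a * sinh (s * T))) t =
      2 * (s * (a * cosh (s * t) + s * sinh (s * t)) / (s * cosh (s * t) + a * sinh (s * t))) *
        ((s * (a * cosh (s * t) + s * sinh (s * t)) / (s * cosh (s * t) + a * sinh (s * t))) ^ 2
          - s ^ 2) := by
  refine iteratedDeriv_three_log_of_linear_ode isOpen_Ioi ht
    (fun x _ => hasDerivAt_mul_cosh_add_mul_sinh s a s x)
    (fun x _ => ((hasDerivAt_mul_cosh_add_mul_sinh a s s x).const_mul s).congr_deriv (by ring))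
    fun x hx => ?_
  have : 0 < sinh (s * x) := sinh_pos_iff.mpr (mul_pos hs hx)
  positivity

/-- With `s = Σ` and `P = Σ ε^{-1/2}`, the function is `ε^{-1/2} C'/C` at `T = T₀ ε^{-1/2}`. -/
theorem tendsto_rescaled_logDeriv {ι : Type*} {l : Filter ι} {α s P : ι → ℝ} {a T : ℝ}
    (ha : a ≠ 0) (hT : T ≠ 0) (hα : Tendsto α l (𝓝 a)) (hs : Tendsto s l (𝓝 0))
    (hP : Tendsto P l (𝓝 1)) :
    Tendsto (fun i => P i * (α i * cosh (T * P i) + s i * sinh (T * P i)) /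
      (s i * cosh (T * P i) + α i * sinh (T * P i))) l (𝓝 (cosh T / sinh T)) := by
  have hTP : Tendsto (fun i => T * P i) l (𝓝 T) := by simpa using hP.const_mul T
  have hcosh := (continuous_cosh.tendsto T).comp hTP
  have hsinh := (continuous_sinh.tendsto T).comp hTP
  have hsinhT : sinh T ≠ 0 := sinh_ne_zero.mpr hT
  convert (hP.mul ((hα.mul hcosh).add (hs.mul hsinh))).div ((hs.mul hcosh).add (hα.mul hsinh))
    (by simpa using mul_ne_zero ha hsinhT) using 2
  · rfl
  · field_simp
    ring

theorem tendsto_two_mul_mul_sq_sub_sq {ι : Type*} {l : Filter ι} {ℓ P : ι → ℝ} {T : ℝ}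
    (hT : T ≠ 0) (hℓ : Tendsto ℓ l (𝓝 (cosh T / sinh T))) (hP : Tendsto P l (𝓝 1)) :
    Tendsto (fun i => 2 * ℓ i * (ℓ i ^ 2 - P i ^ 2)) l (𝓝 (2 * cosh T / sinh T ^ 3)) := by
  have hsinhT : sinh T ≠ 0 := sinh_ne_zero.mpr hT
  convert ((hℓ.const_mul 2).mul ((hℓ.pow 2).sub (hP.pow 2))) using 2
  field_simp
  linear_combination -cosh_sq_sub_sinh_sq T

theorem sq_mul_add_eq_of_cubic_eq_zero {a x e : ℝ} (ha : a ^ 2 = 1 / 12)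
    (h : x ^ 3 - x / 4 + 2 * a ^ 3 * (1 - 24 * e ^ 2) = 0) :
    (x - a) ^ 2 * (x + 2 * a) = 48 * a ^ 3 * e ^ 2 := by
  linear_combination h - 3 * x * ha

theorem sub_le_of_sq_mul_add_eq {a x e : ℝ} (ha : 0 < a) (hx : a < x) (he : 0 ≤ e)
    (h : (x - a) ^ 2 * (x + 2 * a) = 48 * a ^ 3 * e ^ 2) : x - a ≤ 4 * a * e := by
  have hsq : (x - a) ^ 2 ≤ (4 * a * e) ^ 2 := by nlinarith [sq_nonneg (x - a)]
  exact (pow_le_pow_iff_left₀ (by linarith) (by positivity) two_ne_zero).mp hsq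

section CubicRoot

variable {α : ℝ → ℝ} {a : ℝ}

theorem tendsto_of_sq_mul_add_eq (ha : 0 < a)
    (h : ∀ᶠ ε in 𝓝[>] 0, a < α ε ∧ (α ε - a) ^ 2 * (α ε + 2 * a) = 48 * a ^ 3 * ε ^ 2) :
    Tendsto α (𝓝[>] 0) (𝓝 a) := by
  have hupper : Tendsto (fun ε : ℝ => a + 4 * a * ε) (𝓝[>] 0) (𝓝 a) :=
    tendsto_nhdsWithin_of_tendsto_nhds (by simpa using (continuous_const.add
      (continuous_const.mul continuous_id)).tendsto (0 : ℝ) (f := fun ε : ℝ => a + 4 * a * ε))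
  refine tendsto_of_tendsto_of_tendsto_of_le_of_le' tendsto_const_nhds hupper ?_ ?_
  · filter_upwards [h] with ε hε using hε.1.le
  · filter_upwards [h, self_mem_nhdsWithin] with ε hε (hε0 : 0 < ε)
    linarith [sub_le_of_sq_mul_add_eq ha hε.1 hε0.le hε.2]

theorem tendsto_sub_div_of_sq_mul_add_eq (ha : 0 < a)
    (h : ∀ᶠ ε in 𝓝[>] 0, a < α ε ∧ (α ε - a) ^ 2 * (α ε + 2 * a) = 48 * a ^ 3 * ε ^ 2) :
    Tendsto (fun ε => (α ε - a) / ε) (𝓝[>] 0) (𝓝 (4 * a)) := by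
  have hlim : Tendsto (fun ε => √(48 * a ^ 3 / (α ε + 2 * a))) (𝓝[>] 0)
      (𝓝 √(48 * a ^ 3 / (a + 2 * a))) :=
    (tendsto_const_nhds.div ((tendsto_of_sq_mul_add_eq ha h).add_const (2 * a))
      (by positivity)).sqrt
  rw [show 48 * a ^ 3 / (a + 2 * a) = (4 * a) ^ 2 by field_simp; ring,
    sqrt_sq (by positivity)] at hlim
  refine hlim.congr' ?_
  filter_upwards [h, self_mem_nhdsWithin] with ε ⟨hlt, heq⟩ (hε : 0 < ε)
  rw [← sqrt_sq (div_pos (sub_pos.mpr hlt) hε).le]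
  congr 1
  field_simp
  rw [div_eq_iff (by linarith)]
  linear_combination -heq

theorem tendsto_sqrt_of_sq_mul_add_eq (ha : 0 < a) (ha12 : a ^ 2 = 1 / 12)
    (h : ∀ᶠ ε in 𝓝[>] 0, a < α ε ∧ (α ε - a) ^ 2 * (α ε + 2 * a) = 48 * a ^ 3 * ε ^ 2) :
    Tendsto (fun ε => √(3 * α ε ^ 2 / 2 - 1 / 8)) (𝓝[>] 0) (𝓝 0) := by
  have hlim := (((tendsto_of_sq_mul_add_eq ha h).pow 2).const_mul 3 |>.div_const 2
    |>.sub_const (1 / 8)).sqrt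
  rwa [show 3 * a ^ 2 / 2 - 1 / 8 = 0 by linear_combination 3 / 2 * ha12, sqrt_zero] at hlim

theorem tendsto_sqrt_mul_rpow_of_sq_mul_add_eq (ha : 0 < a) (ha12 : a ^ 2 = 1 / 12)
    (h : ∀ᶠ ε in 𝓝[>] 0, a < α ε ∧ (α ε - a) ^ 2 * (α ε + 2 * a) = 48 * a ^ 3 * ε ^ 2) :
    Tendsto (fun ε => √(3 * α ε ^ 2 / 2 - 1 / 8) * ε ^ (-(1 : ℝ) / 2)) (𝓝[>] 0) (𝓝 1) := by
  have hlim : Tendsto (fun ε => 3 / 2 * ((α ε - a) / ε) * (α ε + a)) (𝓝[>] 0)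
      (𝓝 (3 / 2 * (4 * a) * (a + a))) :=
    ((tendsto_sub_div_of_sq_mul_add_eq ha h).const_mul _).mul
      ((tendsto_of_sq_mul_add_eq ha h).add_const a)
  rw [show 3 / 2 * (4 * a) * (a + a) = 1 by linear_combination 12 * ha12] at hlim
  have hsqrt := hlim.sqrt
  rw [sqrt_one] at hsqrt
  refine hsqrt.congr' ?_
  filter_upwards [self_mem_nhdsWithin] with ε (hε : 0 < ε)
  have hu : ε ^ (-(1 : ℝ) / 2) = √ε⁻¹ := by
    rw [sqrt_inv, sqrt_eq_rpow, ← rpow_neg hε.le]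
    norm_num
  rw [hu, ← sqrt_mul' _ (inv_nonneg.mpr hε.le)]
  congr 1
  field_simp
  linear_combination -24 * ha12

end CubicRoot

theorem one_div_two_mul_sqrt_three_sq : (1 / (2 * √3)) ^ 2 = 1 / 12 := by
  rw [div_pow, mul_pow, sq_sqrt (by norm_num)]
  norm_num

theorem div_twelve_mul_sqrt_three (e : ℝ) :
    (1 - 24 * e ^ 2) / (12 * √3) = 2 * (1 / (2 * √3)) ^ 3 * (1 - 24 * e ^ 2) := by
  rw [pow_succ _ 2, one_div_two_mul_sqrt_three_sq]
  field_simp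

theorem rpow_neg_three_div_two {x : ℝ} (hx : 0 ≤ x) :
    x ^ (-(3 : ℝ) / 2) = (x ^ (-(1 : ℝ) / 2)) ^ 3 := by
  rw [← rpow_natCast, ← rpow_mul hx]
  norm_num

theorem stmt19_general (g : ℝ → ℝ) (hg : ∀ ε : ℝ, g ε = (1 - 24 * ε ^ 2) / (12 * Real.sqrt 3))
    (α : ℝ → ℝ)
    (hroot : ∀ ε : ℝ, ε ∈ Set.Ioo 0 (1 / Real.sqrt 24) →
      (α ε) ^ 3 - α ε / 4 + g ε = 0)
    (hbounds : ∀ ε : ℝ, ε ∈ Set.Ioo 0 (1 / Real.sqrt 24) →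
      1 / (2 * Real.sqrt 3) < α ε ∧ α ε < 1 / 2)
    (Sig : ℝ → ℝ) (hSig : ∀ ε : ℝ, Sig ε = Real.sqrt (3 * (α ε) ^ 2 / 2 - 1 / 8))
    (C : ℝ → ℝ → ℝ)
    (hC : ∀ ε T : ℝ, C ε T = Sig ε * Real.cosh (Sig ε * T) + α ε * Real.sinh (Sig ε * T)) :
    ∀ T₀ : ℝ, 0 < T₀ →
      Tendsto (fun ε : ℝ =>
          ε ^ (-(3 : ℝ) / 2)
            * iteratedDeriv 3 (fun T => Real.log (C ε T)) (T₀ * ε ^ (-(1 : ℝ) / 2)))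
        (nhdsWithin 0 (Set.Ioi 0))
        (nhds (2 * Real.cosh T₀ / Real.sinh T₀ ^ 3)) := by
  intro T₀ hT₀
  obtain rfl : g = _ := funext hg
  obtain rfl : C = _ := funext fun ε => funext (hC ε)
  obtain rfl : Sig = _ := funext hSig
  set a : ℝ := 1 / (2 * √3)
  have ha : 0 < a := by positivity
  have ha12 : a ^ 2 = 1 / 12 := one_div_two_mul_sqrt_three_sq
  have hcubic : ∀ᶠ ε in 𝓝[>] 0,
      a < α ε ∧ (α ε - a) ^ 2 * (α ε + 2 * a) = 48 * a ^ 3 * ε ^ 2 := by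
    filter_upwards [Ioo_mem_nhdsGT (by positivity : (0 : ℝ) < 1 / √24)] with ε hε
    exact ⟨(hbounds ε hε).1,
      sq_mul_add_eq_of_cubic_eq_zero ha12 (div_twelve_mul_sqrt_three ε ▸ hroot ε hε)⟩
  have hP := tendsto_sqrt_mul_rpow_of_sq_mul_add_eq ha ha12 hcubic
  refine (tendsto_two_mul_mul_sq_sub_sq hT₀.ne' (tendsto_rescaled_logDeriv ha.ne' hT₀.ne'
    (tendsto_of_sq_mul_add_eq ha hcubic) (tendsto_sqrt_of_sq_mul_add_eq ha ha12 hcubic) hP)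
    hP).congr' ?_
  filter_upwards [hcubic, self_mem_nhdsWithin] with ε ⟨hαa, _⟩ (hε : 0 < ε)
  set s := √(3 * α ε ^ 2 / 2 - 1 / 8)
  set u := ε ^ (-(1 : ℝ) / 2)
  have hs : 0 < s := sqrt_pos.mpr (by nlinarith)
  rw [iteratedDeriv_three_log_mul_cosh_add_mul_sinh hs (ha.trans hαa).le (by positivity),
    rpow_neg_three_div_two hε.le, show s * (T₀ * u) = T₀ * (s * u) by ring]
  ring

/-- Scaling limit of the two-point function of weighted cubic maps. With
`g(ε) = (1 − 24ε²)/(12√3)`, `α(ε)` the largest real root of `x³ − x/4 + g(ε) = 0`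
(which lies in `(1/(2√3), 1/2)`), `Σ(ε) = √(3α(ε)²/2 − 1/8)` and
`C_ε(T) = Σ(ε)cosh(Σ(ε)T) + α(ε)sinh(Σ(ε)T)`, one has, for every fixed `T₀ > 0`,
`ε^{−3/2}·(log C_ε)'''(T₀ ε^{−1/2}) → 2cosh(T₀)/sinh³(T₀)` as `ε → 0⁺`. -/
theorem stmt19 (g : ℝ → ℝ) (hg : ∀ ε : ℝ, g ε = (1 - 24 * ε ^ 2) / (12 * Real.sqrt 3))
    (α : ℝ → ℝ)
    (hroot : ∀ ε : ℝ, ε ∈ Set.Ioo 0 (1 / Real.sqrt 24) →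
      (α ε) ^ 3 - α ε / 4 + g ε = 0)
    (hbounds : ∀ ε : ℝ, ε ∈ Set.Ioo 0 (1 / Real.sqrt 24) →
      1 / (2 * Real.sqrt 3) < α ε ∧ α ε < 1 / 2)
    (hmax : ∀ ε : ℝ, ε ∈ Set.Ioo 0 (1 / Real.sqrt 24) →
      ∀ x : ℝ, x ^ 3 - x / 4 + g ε = 0 → x ≤ α ε)
    (Sig : ℝ → ℝ) (hSig : ∀ ε : ℝ, Sig ε = Real.sqrt (3 * (α ε) ^ 2 / 2 - 1 / 8))
    (C : ℝ → ℝ → ℝ)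
    (hC : ∀ ε T : ℝ, C ε T = Sig ε * Real.cosh (Sig ε * T) + α ε * Real.sinh (Sig ε * T)) :
    ∀ T₀ : ℝ, 0 < T₀ →
      Tendsto (fun ε : ℝ =>
          ε ^ (-(3 : ℝ) / 2)
            * iteratedDeriv 3 (fun T => Real.log (C ε T)) (T₀ * ε ^ (-(1 : ℝ) / 2)))
        (nhdsWithin 0 (Set.Ioi 0))
        (nhds (2 * Real.cosh T₀ / Real.sinh T₀ ^ 3)) :=
  stmt19_general g hg α hroot hbounds Sig hSig C hC
end
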